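/- arXiv:0709.1369 — 8 statements merged into one kernel-verified Lean document; each statement's English description precedes it below -/
import Mathlib

section
/- Let $n \geq 3$ and $t > n/2$. Then $\dfrac{4 (n-2)^{n-2} t^n}{n^n (t-1)^{n-2}} > 1$. -/
/-- For `n ≥ 3` and real `t > n/2`, we have `4 (n-2)^(n-2) tⁿ / (nⁿ (t-1)^(n-2)) > 1`. -/
theorem limiting_inequality (n : ℕ) (hn : 3 ≤ n) (t : ℝ) (ht : (n : ℝ) / 2 < t) :
    1 < 4 * ((n : ℝ) - 2) ^ (n - 2) * t ^ n / ((n : ℝ) ^ n * (t - 1) ^ (n - 2)) := by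
  have hN : (3 : ℝ) ≤ (n : ℝ) := by exact_mod_cast hn
  have hN0 : (0 : ℝ) < (n : ℝ) := by linarith
  have h2 : (0 : ℝ) < (n : ℝ) - 2 := by linarith
  have ht1 : (1 : ℝ) < t := by linarith
  have ht0 : (0 : ℝ) < t := by linarith
  -- Bernoulli step
  set s : ℝ := 2 * t / (n : ℝ) - 1 with hs_def
  have hs0 : 0 < s := by
    rw [hs_def, lt_sub_iff_add_lt, zero_add, lt_div_iff₀ hN0]
    linarith
  have hp1 : 1 < (n : ℝ) / ((n : ℝ) - 2) := by
    rw [lt_div_iff₀ h2]; linarith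
  have key := one_add_mul_self_lt_rpow_one_add (by linarith : (-1 : ℝ) ≤ s) (ne_of_gt hs0) hp1
  have hlhs : 1 + (n : ℝ) / ((n : ℝ) - 2) * s = 2 * (t - 1) / ((n : ℝ) - 2) := by
    rw [hs_def]; field_simp; ring
  have hrhs : 1 + s = 2 * t / (n : ℝ) := by rw [hs_def]; ring
  rw [hlhs, hrhs] at key
  -- raise to power n - 2
  have ha : (0 : ℝ) < 2 * (t - 1) / ((n : ℝ) - 2) := div_pos (by linarith) h2
  have hb : (0 : ℝ) < 2 * t / (n : ℝ) := div_pos (by linarith) hN0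
  have key2 : (2 * (t - 1) / ((n : ℝ) - 2)) ^ ((n : ℝ) - 2) <
      ((2 * t / (n : ℝ)) ^ ((n : ℝ) / ((n : ℝ) - 2))) ^ ((n : ℝ) - 2) :=
    Real.rpow_lt_rpow ha.le key h2
  have e1 : ((2 * t / (n : ℝ)) ^ ((n : ℝ) / ((n : ℝ) - 2))) ^ ((n : ℝ) - 2)
      = (2 * t / (n : ℝ)) ^ (n : ℝ) := by
    rw [← Real.rpow_mul hb.le, div_mul_cancel₀ _ h2.ne']
  rw [e1] at key2
  have e2 : ((n - 2 : ℕ) : ℝ) = (n : ℝ) - 2 := by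
    push_cast [Nat.cast_sub (by omega : 2 ≤ n)]; ring
  rw [← e2, Real.rpow_natCast, Real.rpow_natCast] at key2
  rw [e2] at key2
  -- now key2 : (2(t-1)/(N-2))^(n-2) < (2t/N)^n  (nat powers)
  rw [div_pow, div_pow, div_lt_div_iff₀ (pow_pos h2 _) (pow_pos hN0 _)] at key2
  have h4 : (2 : ℝ) ^ n = 2 ^ (n - 2) * 4 := by
    rw [show n = (n - 2) + 2 from by omega]
    rw [pow_add]; norm_num
  rw [mul_pow, mul_pow, h4] at key2
  have hpos : (0 : ℝ) < 2 ^ (n - 2) := by positivity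
  have hfin : (n : ℝ) ^ n * (t - 1) ^ (n - 2) < 4 * ((n : ℝ) - 2) ^ (n - 2) * t ^ n := by
    nlinarith [key2, hpos]
  rw [one_lt_div (mul_pos (pow_pos hN0 n) (pow_pos (by linarith : (0:ℝ) < t - 1) (n - 2)))]
  exact hfin
end

section
/- Let $G_2 = \{(z_1, z_2) \in \mathbb{C}^2 : |z_1|(1 + |z_2|) < 1\}$. For every $x \in (0,1)$ and every $(X_1, X_2) \in \mathbb{C}^2$, the Carathéodory–Reiffen metric satisfies $\gamma_{G_2}((x,0); (X_1, X_2)) \geq \dfrac{|X_1 + x X_2|}{1 - x^2}$. -/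
open Complex

/-- The Carathéodory–Reiffen pseudometric of a domain `D ⊂ ℂ²`:
`γ_D(a;X) = sup { |f'(a)X| : f ∈ 𝒪(D,Δ), f(a) = 0 }`. -/
noncomputable def caratheodoryReiffen (D : Set (ℂ × ℂ)) (a X : ℂ × ℂ) : ℝ :=
  sSup {r : ℝ | ∃ f : ℂ × ℂ → ℂ, DifferentiableOn ℂ f D ∧ (∀ z ∈ D, ‖f z‖ < 1) ∧
    f a = 0 ∧ r = ‖fderivWithin ℂ f D a X‖}

/-!
The map `F(z) = z₁(1 + z₂)` sends `G₂` into the unit disc and `(x, 0)` to `x`. Composed with the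
disc automorphism moving `x` to `0` it is a competitor in the supremum defining `γ_{G₂}((x,0); ·)`,
and its differential at `(x, 0)` is `X ↦ (X₁ + x X₂) / (1 - x²)`. The supremum is finite by the
Schwarz lemma on a ball around `(x, 0)` contained in `G₂`.
-/

open Metric Set ComplexConjugate

section Moebius

/-- The automorphism of the unit disc sending `c` to `0`. -/
noncomputable def moebius (c w : ℂ) : ℂ := (w - c) / (1 - conj c * w)

variable {c w : ℂ}

lemma moebius_self : moebius c c = 0 := by simp [moebius]

lemma one_sub_conj_mul_ne_zero (hc : ‖c‖ < 1) (hw : ‖w‖ ≤ 1) : 1 - conj c * w ≠ 0 := by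
  have : ‖conj c * w‖ < 1 := by
    rw [norm_mul, RCLike.norm_conj]
    nlinarith [norm_nonneg c, norm_nonneg w]
  intro h
  rw [← sub_eq_zero.mp h, norm_one] at this
  exact lt_irrefl _ this

lemma norm_one_sub_conj_mul_sq_sub_norm_sub_sq (c w : ℂ) :
    ‖1 - conj c * w‖ ^ 2 - ‖w - c‖ ^ 2 = (1 - ‖c‖ ^ 2) * (1 - ‖w‖ ^ 2) := by
  simp only [Complex.sq_norm, normSq_apply, sub_re, sub_im, mul_re, mul_im, one_re, one_im,
    conj_re, conj_im]
  ring

lemma norm_moebius_lt_one (hc : ‖c‖ < 1) (hw : ‖w‖ < 1) : ‖moebius c w‖ < 1 := by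
  have hden := one_sub_conj_mul_ne_zero hc hw.le
  have hsq : ‖w - c‖ ^ 2 < ‖1 - conj c * w‖ ^ 2 := by
    have := norm_one_sub_conj_mul_sq_sub_norm_sub_sq c w
    nlinarith [mul_pos (by nlinarith [norm_nonneg c] : (0 : ℝ) < 1 - ‖c‖ ^ 2)
      (by nlinarith [norm_nonneg w] : (0 : ℝ) < 1 - ‖w‖ ^ 2)]
  rw [moebius, norm_div, div_lt_one (norm_pos_iff.mpr hden)]
  exact (pow_lt_pow_iff_left₀ (norm_nonneg _) (norm_nonneg _) two_ne_zero).mp hsq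

lemma differentiableOn_moebius (hc : ‖c‖ < 1) : DifferentiableOn ℂ (moebius c) (ball 0 1) :=
  fun _ hw ↦ ((differentiableAt_id.sub_const c).div
    ((differentiableAt_id.const_mul _).const_sub 1)
    (one_sub_conj_mul_ne_zero hc (mem_ball_zero_iff.mp hw).le)).differentiableWithinAt

lemma hasDerivAt_moebius_self (hc : ‖c‖ < 1) :
    HasDerivAt (moebius c) (((1 - ‖c‖ ^ 2 : ℝ) : ℂ)⁻¹) c := by
  have hden := one_sub_conj_mul_ne_zero hc hc.le
  have h := ((hasDerivAt_id c).sub_const c).div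
    (((hasDerivAt_id c).const_mul (conj c)).const_sub 1) hden
  have hnorm : ((1 - ‖c‖ ^ 2 : ℝ) : ℂ) = 1 - conj c * c := by
    rw [mul_comm, mul_conj, normSq_eq_norm_sq]; push_cast; ring
  refine HasDerivAt.congr_deriv (f := moebius c) h ?_
  rw [hnorm]
  simp only [id, sub_self, zero_mul, sub_zero, one_mul]
  field_simp

end Moebius

section CaratheodoryReiffen

variable {D : Set (ℂ × ℂ)} {a : ℂ × ℂ}

lemma bddAbove_caratheodoryReiffen_set (hD : IsOpen D) (ha : a ∈ D) (X : ℂ × ℂ) :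
    BddAbove {r : ℝ | ∃ f : ℂ × ℂ → ℂ, DifferentiableOn ℂ f D ∧ (∀ z ∈ D, ‖f z‖ < 1) ∧
      f a = 0 ∧ r = ‖fderivWithin ℂ f D a X‖} := by
  obtain ⟨ε, hε, hball⟩ := isOpen_iff.mp hD a ha
  refine ⟨1 / ε * ‖X‖, ?_⟩
  rintro _ ⟨f, hf, hf_lt, hfa, rfl⟩
  have hmaps : MapsTo f (ball a ε) (closedBall (f a) 1) := fun z hz ↦ by
    simpa [hfa] using (hf_lt z (hball hz)).le
  have hschwarz := Complex.norm_fderiv_le_div_of_mapsTo_ball (hf.mono hball) hmaps hε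
  rw [fderivWithin_of_isOpen hD ha]
  exact (fderiv ℂ f a).le_of_opNorm_le hschwarz X

lemma norm_apply_le_caratheodoryReiffen (hD : IsOpen D) (ha : a ∈ D) {f : ℂ × ℂ → ℂ}
    (hf : DifferentiableOn ℂ f D) (hf_lt : ∀ z ∈ D, ‖f z‖ < 1) (hfa : f a = 0)
    {f' : ℂ × ℂ →L[ℂ] ℂ} (hf' : HasFDerivAt f f' a) (X : ℂ × ℂ) :
    ‖f' X‖ ≤ caratheodoryReiffen D a X :=
  le_csSup (bddAbove_caratheodoryReiffen_set hD ha X)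
    ⟨f, hf, hf_lt, hfa, by rw [fderivWithin_of_isOpen hD ha, hf'.fderiv]⟩

end CaratheodoryReiffen

def G₂ : Set (ℂ × ℂ) := {z | ‖z.1‖ * (1 + ‖z.2‖) < 1}

lemma isOpen_G₂ : IsOpen G₂ :=
  isOpen_lt (by fun_prop) continuous_const

lemma norm_fst_mul_one_add_snd_lt_one {z : ℂ × ℂ} (hz : z ∈ G₂) : ‖z.1 * (1 + z.2)‖ < 1 :=
  calc ‖z.1 * (1 + z.2)‖ ≤ ‖z.1‖ * (1 + ‖z.2‖) := by
        rw [norm_mul]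
        gcongr
        simpa using norm_add_le (1 : ℂ) z.2
    _ < 1 := hz

lemma hasFDerivAt_fst_mul_one_add_snd (a : ℂ × ℂ) :
    HasFDerivAt (fun z : ℂ × ℂ ↦ z.1 * (1 + z.2))
      ((1 + a.2) • ContinuousLinearMap.fst ℂ ℂ ℂ + a.1 • ContinuousLinearMap.snd ℂ ℂ ℂ) a := by
  have h := (hasFDerivAt_fst (𝕜 := ℂ) (p := a)).mul ((hasFDerivAt_const 1 a).add hasFDerivAt_snd)
  exact h.congr_fderiv (by ext <;> simp [add_comm])

/-- In `G₂ = {(z₁,z₂) : |z₁|(1+|z₂|) < 1}`, for `x ∈ (0,1)` and `X ∈ ℂ²`,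
`γ_{G₂}((x,0);X) ≥ |X₁ + x X₂| / (1 - x²)`. -/
theorem caratheodory_lower_bound_G2 (x : ℝ) (hx : x ∈ Set.Ioo (0 : ℝ) 1) (X₁ X₂ : ℂ) :
    ‖X₁ + (x : ℂ) * X₂‖ / (1 - x ^ 2) ≤
      caratheodoryReiffen {z : ℂ × ℂ | ‖z.1‖ * (1 + ‖z.2‖) < 1} ((x : ℂ), 0) (X₁, X₂) := by
  change _ ≤ caratheodoryReiffen G₂ _ _
  obtain ⟨hx0, hx1⟩ := hx
  have hxc : ‖(x : ℂ)‖ = x := by simp [hx0.le]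
  have hx_disc : ‖(x : ℂ)‖ < 1 := hxc.trans_lt hx1
  set F : ℂ × ℂ → ℂ := fun z ↦ z.1 * (1 + z.2)
  have hF : MapsTo F G₂ (ball 0 1) := fun z hz ↦
    mem_ball_zero_iff.mpr (norm_fst_mul_one_add_snd_lt_one hz)
  have ha : ((x : ℂ), (0 : ℂ)) ∈ G₂ := by simpa [G₂, abs_of_pos hx0] using hx1
  have hderiv := (hasDerivAt_moebius_self hx_disc).comp_hasFDerivAt_of_eq
    ((x : ℂ), (0 : ℂ)) (hasFDerivAt_fst_mul_one_add_snd _) (by simp)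
  have hbound := norm_apply_le_caratheodoryReiffen isOpen_G₂ ha
    ((differentiableOn_moebius hx_disc).comp (by fun_prop) hF)
    (fun z hz ↦ norm_moebius_lt_one hx_disc (mem_ball_zero_iff.mp (hF hz)))
    (by simp [F, moebius_self]) hderiv (X₁, X₂)
  calc ‖X₁ + x * X₂‖ / (1 - x ^ 2)
      = ‖((1 - ‖(x : ℂ)‖ ^ 2 : ℝ) : ℂ)⁻¹ * (X₁ + x * X₂)‖ := by
        rw [norm_mul, norm_inv, norm_real, hxc, Real.norm_of_nonneg (by nlinarith), inv_mul_eq_div]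
    _ ≤ _ := by simpa [mul_add] using hbound
end

section
/- The set $G_2 = \{(z_1, z_2) \in \mathbb{C}^2 : |z_1|(1 + |z_2|) < 1\}$ is an (open, connected) unbounded complete Reinhardt domain, and its convex hull equals $\Delta \times \mathbb{C}$, where $\Delta \subset \mathbb{C}$ is the open unit disc. -/
private lemma G2_key {a b x y : ℝ} (ha : 0 ≤ a) (ha1 : a ≤ 1) (hb : 0 ≤ b) (hb1 : b ≤ 1)
    (hx : 0 ≤ x) (hy : 0 ≤ y) (h : x * (1 + y) < 1) : a * x * (1 + b * y) < 1 := by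
  have hab : a * b ≤ 1 := mul_le_one₀ ha1 hb hb1
  nlinarith [mul_nonneg hx hy, mul_nonneg (mul_nonneg ha hx) hy]

/-- `G₂ = {(z₁,z₂) ∈ ℂ² : |z₁|(1+|z₂|) < 1}` is an open, connected, unbounded,
complete Reinhardt domain, and its convex hull is `Δ × ℂ`. -/
theorem G2_complete_Reinhardt_unbounded_convexHull :
    IsOpen {z : ℂ × ℂ | ‖z.1‖ * (1 + ‖z.2‖) < 1} ∧
    IsConnected {z : ℂ × ℂ | ‖z.1‖ * (1 + ‖z.2‖) < 1} ∧
    ¬ Bornology.IsBounded {z : ℂ × ℂ | ‖z.1‖ * (1 + ‖z.2‖) < 1} ∧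
    (∀ z ∈ {z : ℂ × ℂ | ‖z.1‖ * (1 + ‖z.2‖) < 1}, ∀ l₁ l₂ : ℂ, ‖l₁‖ ≤ 1 → ‖l₂‖ ≤ 1 →
      (l₁ * z.1, l₂ * z.2) ∈ {z : ℂ × ℂ | ‖z.1‖ * (1 + ‖z.2‖) < 1}) ∧
    convexHull ℝ {z : ℂ × ℂ | ‖z.1‖ * (1 + ‖z.2‖) < 1} = {z : ℂ × ℂ | ‖z.1‖ < 1} := by
  set S : Set (ℂ × ℂ) := {z : ℂ × ℂ | ‖z.1‖ * (1 + ‖z.2‖) < 1} with hS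
  have hopen : IsOpen S := by
    have : Continuous fun z : ℂ × ℂ => ‖z.1‖ * (1 + ‖z.2‖) := by fun_prop
    exact isOpen_lt this continuous_const
  have hstar : StarConvex ℝ (0 : ℂ × ℂ) S := by
    intro x hx a b ha hb hab
    simp only [hS, Set.mem_setOf_eq, smul_zero, zero_add, Prod.smul_fst, Prod.smul_snd,
      norm_smul, Real.norm_eq_abs, abs_of_nonneg hb] at *
    exact G2_key hb (by linarith) hb (by linarith) (norm_nonneg _) (norm_nonneg _) hx
  have hpc : IsPathConnected S := by
    refine ⟨0, by simp [hS], ?_⟩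
    intro y hy
    have hseg := hstar.segment_subset hy
    have h2 := ((convex_segment (0 : ℂ × ℂ) y).isPathConnected
      ⟨0, left_mem_segment ℝ (0 : ℂ × ℂ) y⟩).joinedIn 0 (left_mem_segment ℝ (0 : ℂ × ℂ) y)
      y (right_mem_segment ℝ (0 : ℂ × ℂ) y)
    exact h2.mono hseg
  refine ⟨hopen, hpc.isConnected, ?_, ?_, ?_⟩
  · intro h
    obtain ⟨C, hC⟩ := isBounded_iff_forall_norm_le.mp h
    have hmem : ((0 : ℂ), ((|C| + 1 : ℝ) : ℂ)) ∈ S := by simp [hS]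
    have h2 := hC _ hmem
    rw [Prod.norm_def] at h2
    have h3 : ‖((|C| + 1 : ℝ) : ℂ)‖ = |C| + 1 := by
      rw [Complex.norm_real, Real.norm_eq_abs, abs_of_nonneg (by positivity)]
    simp only [norm_zero, h3] at h2
    have h4 : (|C| + 1 : ℝ) ≤ C := le_trans (le_max_right _ _) h2
    have := le_abs_self C
    linarith
  · intro z hz l₁ l₂ h₁ h₂
    simp only [hS, Set.mem_setOf_eq, norm_mul] at *
    exact G2_key (norm_nonneg l₁) h₁ (norm_nonneg l₂) h₂ (norm_nonneg _) (norm_nonneg _) hz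
  · apply le_antisymm
    · apply convexHull_min
      · intro z hz
        simp only [hS, Set.mem_setOf_eq] at *
        nlinarith [norm_nonneg z.1, norm_nonneg z.2]
      · have : {z : ℂ × ℂ | ‖z.1‖ < 1} = Metric.ball (0:ℂ) 1 ×ˢ (Set.univ : Set ℂ) := by
          ext z; simp [Metric.mem_ball, dist_zero_right]
        rw [this]
        exact (convex_ball 0 1).prod convex_univ
    · intro z hz
      simp only [Set.mem_setOf_eq] at hz
      set t : ℝ := (1 - ‖z.1‖) / 2 with ht
      have ht0 : 0 < t := by rw [ht]; linarith
      have ht1 : t < 1 := by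
        have := norm_nonneg z.1; rw [ht]; linarith
      have h1t : (0:ℝ) < 1 - t := by linarith
      have hA : ((0 : ℂ), ((t : ℂ))⁻¹ * z.2) ∈ S := by simp [hS]
      have hB : ((((1 - t : ℝ) : ℂ))⁻¹ * z.1, (0 : ℂ)) ∈ S := by
        simp only [hS, Set.mem_setOf_eq, norm_mul, norm_zero, add_zero, mul_one, norm_inv]
        rw [Complex.norm_real, Real.norm_eq_abs, abs_of_nonneg h1t.le,
          inv_mul_lt_one₀ h1t]
        rw [ht]; linarith
      have hmem := (convex_convexHull ℝ S) (subset_convexHull ℝ S hA) (subset_convexHull ℝ S hB)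
        ht0.le h1t.le (by ring)
      have htC : ((t : ℝ) : ℂ) ≠ 0 := by exact_mod_cast ht0.ne'
      have h1tC : (((1 - t : ℝ)) : ℂ) ≠ 0 := by exact_mod_cast h1t.ne'
      have heq : t • (((0 : ℂ), ((t : ℂ))⁻¹ * z.2)) +
          (1 - t) • (((((1 - t : ℝ) : ℂ))⁻¹ * z.1, (0 : ℂ))) = z := by
        apply Prod.ext
        · simp only [Prod.fst_add, Prod.smul_fst, Complex.real_smul, smul_zero, zero_add]
          have h1tC' : (1 : ℂ) - (t : ℝ) ≠ 0 := by push_cast at h1tC; exact h1tC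
          push_cast
          rw [← mul_assoc, mul_inv_cancel₀ h1tC', one_mul]
        · simp only [Prod.snd_add, Prod.smul_snd, Complex.real_smul, smul_zero, add_zero]
          field_simp
      rwa [heq] at hmem
end

section
/- Let $D \subset \mathbb{C}^n$ be a domain, $z_0 \in D$, and $\eta$ a pseudometric on $D$ whose unit ball $B_\eta(z_0) = \{X : \eta(z_0; X) < 1\}$ is a bounded Reinhardt domain (i.e. invariant under $(X_1,\dots,X_n) \mapsto (\lambda_1 X_1, \dots, \lambda_n X_n)$ for all $|\lambda_j| = 1$). Then the Wu ellipsoid $B_{\widetilde{\mathbb{W}}\eta}(z_0)$ — the unique ellipsoid of minimal volume containing $B_\eta(z_0)$ — is a complete Reinhardt domain, and there exist $a_1,\dots,a_n > 0$ with $\widetilde{\mathbb{W}}\eta(z_0; X) = \big(\sum_{j=1}^n |X_j|^2/a_j\big)^{1/2}$; i.e. the minimal ellipsoid is diagonal. -/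
/-!
Conjugating `A` by a diagonal unitary `diag(l)` gives the ellipsoid `diag(l)⁻¹(ellipsoid A)`,
which has the same volume and, by the torus invariance of `B`, still contains `B`. By uniqueness
it is the same ellipsoid, so the quadratic form of `A` is torus invariant. Flipping the sign of
one coordinate then kills every off-diagonal entry of the Hermitian matrix `A`.
-/

open MeasureTheory
open scoped ComplexOrder

/-- The open unit ellipsoid of a Hermitian matrix `A` on `ℂⁿ`. -/
def ellipsoid {n : ℕ} (A : Matrix (Fin n) (Fin n) ℂ) : Set (Fin n → ℂ) :=
  {X : Fin n → ℂ | (dotProduct (star X) (A.mulVec X)).re < 1}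

open Matrix

section QuadForm

variable {ι : Type*} [Fintype ι]

noncomputable def quadForm (A : Matrix ι ι ℂ) (X : ι → ℂ) : ℝ :=
  (star X ⬝ᵥ A *ᵥ X).re

theorem continuous_quadForm (A : Matrix ι ι ℂ) : Continuous (quadForm A) := by
  unfold quadForm
  simp only [dotProduct, mulVec, Pi.star_apply]
  fun_prop

theorem quadForm_ofReal_smul (A : Matrix ι ι ℂ) (t : ℝ) (X : ι → ℂ) :
    quadForm A ((t : ℂ) • X) = t ^ 2 * quadForm A X := by
  simp only [quadForm, star_smul, mulVec_smul, smul_dotProduct, dotProduct_smul,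
    Complex.star_def, Complex.conj_ofReal, smul_eq_mul, ← mul_assoc, ← Complex.ofReal_mul,
    Complex.re_ofReal_mul, sq]

theorem Matrix.PosDef.quadForm_pos {A : Matrix ι ι ℂ} (hA : A.PosDef) {X : ι → ℂ}
    (hX : X ≠ 0) : 0 < quadForm A X :=
  (Complex.pos_iff.1 (hA.dotProduct_mulVec_pos hX)).1

theorem quadForm_conjTranspose_mul_mul (A B : Matrix ι ι ℂ) (X : ι → ℂ) :
    quadForm (Bᴴ * A * B) X = quadForm A (B *ᵥ X) := by
  simp only [quadForm, star_mulVec, dotProduct_mulVec, vecMul_vecMul, mulVec_mulVec,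
    Matrix.mul_assoc]

theorem quadForm_add_sub_quadForm_sub (A : Matrix ι ι ℂ) (X Y : ι → ℂ) :
    quadForm A (X + Y) - quadForm A (X - Y) =
      2 * (star X ⬝ᵥ A *ᵥ Y + star Y ⬝ᵥ A *ᵥ X).re := by
  simp only [quadForm, star_add, star_sub, mulVec_add, mulVec_sub, add_dotProduct,
    sub_dotProduct, dotProduct_add, dotProduct_sub, Complex.add_re, Complex.sub_re]
  ring

variable [DecidableEq ι]

theorem dotProduct_single_mulVec_single (A : Matrix ι ι ℂ) (j k : ι) (b c : ℂ) :
    star (Pi.single j b : ι → ℂ) ⬝ᵥ A *ᵥ Pi.single k c = star b * A j k * c := by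
  rw [Pi.star_single, mulVec_single, single_dotProduct]
  simp only [Pi.smul_apply, col_apply, op_smul_eq_mul]
  ring

theorem Matrix.IsHermitian.isDiag_of_quadForm_mul_eq {A : Matrix ι ι ℂ} (hA : A.IsHermitian)
    (hinv : ∀ l : ι → ℂ, (∀ j, ‖l j‖ = 1) → ∀ X, quadForm A (l * X) = quadForm A X) :
    A.IsDiag := by
  intro j k hjk
  -- flipping the sign of the `k`-th coordinate of `e_j + c e_k` changes the form by `4 |A j k|²`
  set c := star (A j k)
  set l : ι → ℂ := Function.update 1 k (-1)
  have hl : ∀ m, ‖l m‖ = 1 := fun m => by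
    rcases eq_or_ne m k with rfl | hm <;> simp [l, *]
  have hflip : l * (Pi.single j 1 + Pi.single k c) = Pi.single j 1 - Pi.single k c := by
    funext m
    rcases eq_or_ne m k with rfl | hm
    · simp [l, Pi.single_eq_of_ne hjk.symm]
    · simp [l, hm]
  have key := quadForm_add_sub_quadForm_sub A (Pi.single j 1) (Pi.single k c)
  rw [← hflip, hinv l hl, sub_self, dotProduct_single_mulVec_single,
    dotProduct_single_mulVec_single, ← hA.apply k j] at key
  have hnormSq : Complex.normSq (A j k) = 0 := by
    simp only [c, Complex.star_def, Complex.conj_conj, map_one, one_mul, mul_one, Complex.mul_conj,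
      Complex.add_re, Complex.ofReal_re] at key
    linarith
  exact Complex.normSq_eq_zero.1 hnormSq

theorem quadForm_of_isDiag {A : Matrix ι ι ℂ} (hA : A.IsDiag) (X : ι → ℂ) :
    quadForm A X = ∑ j, (A j j).re * ‖X j‖ ^ 2 := by
  conv_lhs => rw [quadForm, ← hA.diagonal_diag]
  simp only [dotProduct, mulVec_diagonal, diag_apply, Complex.re_sum]
  refine Finset.sum_congr rfl fun j _ => ?_
  rw [Pi.star_apply, Complex.star_def, mul_left_comm, Complex.conj_mul', ← Complex.ofReal_pow,
    Complex.re_mul_ofReal]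

end QuadForm

section Ellipsoid

variable {n : ℕ}

theorem mem_ellipsoid {A : Matrix (Fin n) (Fin n) ℂ} {X : Fin n → ℂ} :
    X ∈ ellipsoid A ↔ quadForm A X < 1 := Iff.rfl

theorem isOpen_ellipsoid (A : Matrix (Fin n) (Fin n) ℂ) : IsOpen (ellipsoid A) :=
  isOpen_lt (continuous_quadForm A) continuous_const

theorem quadForm_le_of_ellipsoid_subset {A₁ A₂ : Matrix (Fin n) (Fin n) ℂ} (hA₂ : A₂.PosDef)
    (h : ellipsoid A₁ ⊆ ellipsoid A₂) (X : Fin n → ℂ) : quadForm A₂ X ≤ quadForm A₁ X := by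
  rcases eq_or_ne X 0 with rfl | hX
  · simp [quadForm]
  by_contra! hlt
  have hpos := hA₂.quadForm_pos hX
  -- rescale `X` onto the boundary of `ellipsoid A₂`
  set t := (√(quadForm A₂ X))⁻¹
  have ht : t ^ 2 * quadForm A₂ X = 1 := by
    rw [inv_pow, Real.sq_sqrt hpos.le, inv_mul_cancel₀ hpos.ne']
  have hmem : (t : ℂ) • X ∈ ellipsoid A₁ := by
    rw [mem_ellipsoid, quadForm_ofReal_smul, ← ht]
    exact mul_lt_mul_of_pos_left hlt (pow_pos (inv_pos.2 (Real.sqrt_pos.2 hpos)) 2)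
  have hmem₂ := h hmem
  rw [mem_ellipsoid, quadForm_ofReal_smul, ht] at hmem₂
  exact lt_irrefl 1 hmem₂

theorem quadForm_eq_of_ellipsoid_eq {A₁ A₂ : Matrix (Fin n) (Fin n) ℂ} (hA₁ : A₁.PosDef)
    (hA₂ : A₂.PosDef) (h : ellipsoid A₁ = ellipsoid A₂) : quadForm A₁ = quadForm A₂ :=
  funext fun X =>
    le_antisymm (quadForm_le_of_ellipsoid_subset hA₁ h.ge X)
      (quadForm_le_of_ellipsoid_subset hA₂ h.le X)

theorem ellipsoid_conjTranspose_mul_mul (A B : Matrix (Fin n) (Fin n) ℂ) :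
    ellipsoid (Bᴴ * A * B) = (B *ᵥ ·) ⁻¹' ellipsoid A :=
  Set.ext fun X => by
    rw [Set.mem_preimage, mem_ellipsoid, mem_ellipsoid, quadForm_conjTranspose_mul_mul]

theorem measurePreserving_mul_of_norm_eq_one {ι : Type*} [Fintype ι] {l : ι → ℂ}
    (hl : ∀ j, ‖l j‖ = 1) : MeasurePreserving (l * ·) volume volume :=
  volume_preserving_pi fun j => by
    simpa only [rotation_apply] using
      (rotation ⟨l j, mem_sphere_zero_iff_norm.2 (hl j)⟩).measurePreserving

theorem volume_ellipsoid_conj_diagonal (A : Matrix (Fin n) (Fin n) ℂ) {l : Fin n → ℂ}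
    (hl : ∀ j, ‖l j‖ = 1) :
    volume (ellipsoid ((diagonal l)ᴴ * A * diagonal l)) = volume (ellipsoid A) := by
  rw [ellipsoid_conjTranspose_mul_mul, show (diagonal l *ᵥ ·) = (l * ·) from
    funext fun X => funext (mulVec_diagonal l X)]
  exact (measurePreserving_mul_of_norm_eq_one hl).measure_preimage
    (isOpen_ellipsoid A).measurableSet.nullMeasurableSet

theorem quadForm_mul_eq_of_unique_ellipsoid {B : Set (Fin n → ℂ)}
    (hB : ∀ (l X : Fin n → ℂ), (∀ j, ‖l j‖ = 1) → X ∈ B → l * X ∈ B)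
    {A : Matrix (Fin n) (Fin n) ℂ} (hA : A.PosDef) (hBA : B ⊆ ellipsoid A)
    (huniq : ∀ A' : Matrix (Fin n) (Fin n) ℂ, A'.PosDef → B ⊆ ellipsoid A' →
      volume (ellipsoid A') = volume (ellipsoid A) → ellipsoid A' = ellipsoid A)
    {l : Fin n → ℂ} (hl : ∀ j, ‖l j‖ = 1) (X : Fin n → ℂ) :
    quadForm A (l * X) = quadForm A X := by
  set A' := (diagonal l)ᴴ * A * diagonal l
  have hquad : ∀ Y, quadForm A' Y = quadForm A (l * Y) := fun Y => by
    rw [quadForm_conjTranspose_mul_mul, show diagonal l *ᵥ Y = l * Y from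
      funext (mulVec_diagonal l Y)]
  have hA' : A'.PosDef := hA.conjTranspose_mul_mul_same fun Y Z hYZ => funext fun j =>
    mul_left_cancel₀ (norm_ne_zero_iff.1 ((hl j).trans_ne one_ne_zero))
      (by simpa only [mulVec_diagonal] using congrFun hYZ j)
  have hBA' : B ⊆ ellipsoid A' := fun Y hY => by
    rw [mem_ellipsoid, hquad]
    exact hBA (hB l Y hl hY)
  rw [← hquad, quadForm_eq_of_ellipsoid_eq hA' hA
    (huniq A' hA' hBA' (volume_ellipsoid_conj_diagonal A hl))]

theorem mul_mem_ellipsoid_of_isDiag {A : Matrix (Fin n) (Fin n) ℂ} (hA : A.PosSemidef)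
    (hd : A.IsDiag) {l X : Fin n → ℂ} (hl : ∀ j, ‖l j‖ ≤ 1) (hX : X ∈ ellipsoid A) :
    l * X ∈ ellipsoid A := by
  rw [mem_ellipsoid, quadForm_of_isDiag hd] at hX ⊢
  refine lt_of_le_of_lt (Finset.sum_le_sum fun j _ => ?_) hX
  have hAjj : 0 ≤ (A j j).re := (Complex.nonneg_iff.1 hA.diag_nonneg).1
  rw [Pi.mul_apply, norm_mul, mul_pow]
  gcongr
  exact mul_le_of_le_one_left (sq_nonneg _) (pow_le_one₀ (norm_nonneg _) (hl j))

end Ellipsoid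

theorem wu_ellipsoid_diagonal_general (n : ℕ)
    (B : Set (Fin n → ℂ))
    (hBreinhardt : ∀ (l : Fin n → ℂ) (X : Fin n → ℂ), (∀ j, ‖l j‖ = 1) → X ∈ B →
      (fun j => l j * X j) ∈ B)
    (A : Matrix (Fin n) (Fin n) ℂ) (hA : A.PosDef)
    (hBA : B ⊆ ellipsoid A)
    (huniq : ∀ A' : Matrix (Fin n) (Fin n) ℂ, A'.PosDef → B ⊆ ellipsoid A' →
      volume (ellipsoid A') = volume (ellipsoid A) → ellipsoid A' = ellipsoid A) :
    (∀ (l : Fin n → ℂ) (X : Fin n → ℂ), (∀ j, ‖l j‖ ≤ 1) → X ∈ ellipsoid A →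
      (fun j => l j * X j) ∈ ellipsoid A) ∧
    ∃ a : Fin n → ℝ, (∀ j, 0 < a j) ∧
      ellipsoid A = {X : Fin n → ℂ | ∑ j, ‖X j‖ ^ 2 / a j < 1} ∧
      ∀ X : Fin n → ℂ, Real.sqrt ((dotProduct (star X) (A.mulVec X)).re) =
        Real.sqrt (∑ j, ‖X j‖ ^ 2 / a j) := by
  have hdiag : A.IsDiag := hA.isHermitian.isDiag_of_quadForm_mul_eq fun l hl =>
    quadForm_mul_eq_of_unique_ellipsoid hBreinhardt hA hBA huniq hl
  have hquad : ∀ X, quadForm A X = ∑ j, ‖X j‖ ^ 2 / ((A j j).re)⁻¹ := fun X => by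
    simp only [quadForm_of_isDiag hdiag, div_inv_eq_mul, mul_comm]
  refine ⟨fun l X hl hX => mul_mem_ellipsoid_of_isDiag hA.posSemidef hdiag hl hX,
    fun j => ((A j j).re)⁻¹, fun j => inv_pos.2 (Complex.pos_iff.1 hA.diag_pos).1,
    Set.ext fun X => ?_, fun X => congrArg Real.sqrt (hquad X)⟩
  rw [mem_ellipsoid, hquad]
  rfl

/-- If the unit ball `B = B_η(z₀)` of a pseudometric `η` at `z₀ ∈ D` is a bounded
Reinhardt domain, then the minimal-volume ellipsoid containing `B` (the unit ball of
`𝕎̃η(z₀;·)`) is a complete Reinhardt domain and is diagonal: there are `a₁,…,aₙ > 0`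
with `𝕎̃η(z₀;X) = (∑ |X j|²/a j)^{1/2}`. -/
theorem wu_ellipsoid_diagonal (n : ℕ) (D : Set (Fin n → ℂ)) (hD : IsOpen D)
    (z₀ : Fin n → ℂ) (hz₀ : z₀ ∈ D)
    (η : (Fin n → ℂ) → ℝ) (hηpos : ∀ X, 0 ≤ η X)
    (hηhom : ∀ (c : ℂ) X, η (c • X) = ‖c‖ * η X)
    (B : Set (Fin n → ℂ)) (hB : B = {X | η X < 1})
    (hBopen : IsOpen B) (hBbdd : Bornology.IsBounded B)
    (hBreinhardt : ∀ (l : Fin n → ℂ) (X : Fin n → ℂ), (∀ j, ‖l j‖ = 1) → X ∈ B →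
      (fun j => l j * X j) ∈ B)
    (A : Matrix (Fin n) (Fin n) ℂ) (hA : A.PosDef)
    (hBA : B ⊆ ellipsoid A)
    (hmin : ∀ A' : Matrix (Fin n) (Fin n) ℂ, A'.PosDef → B ⊆ ellipsoid A' →
      volume (ellipsoid A) ≤ volume (ellipsoid A'))
    (huniq : ∀ A' : Matrix (Fin n) (Fin n) ℂ, A'.PosDef → B ⊆ ellipsoid A' →
      volume (ellipsoid A') = volume (ellipsoid A) → ellipsoid A' = ellipsoid A) :
    (∀ (l : Fin n → ℂ) (X : Fin n → ℂ), (∀ j, ‖l j‖ ≤ 1) → X ∈ ellipsoid A →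
      (fun j => l j * X j) ∈ ellipsoid A) ∧
    ∃ a : Fin n → ℝ, (∀ j, 0 < a j) ∧
      ellipsoid A = {X : Fin n → ℂ | ∑ j, ‖X j‖ ^ 2 / a j < 1} ∧
      ∀ X : Fin n → ℂ, Real.sqrt ((dotProduct (star X) (A.mulVec X)).re) =
        Real.sqrt (∑ j, ‖X j‖ ^ 2 / a j) :=
  wu_ellipsoid_diagonal_general n B hBreinhardt A hA hBA huniq
end

section
/- Let $D \subset \mathbb{C}^2$ be a domain and $\eta$ a pseudometric on $D$ such that for each $z \in D$ the set of zeros of the Busemann pseudometric $\widehat\eta(z;\cdot)$ is a nontrivial linear subspace (codimension at most 1). If $\widehat\eta$ is upper semicontinuous at $(z, X)$, then $\widetilde{\mathbb{W}}\eta$ is upper semicontinuous at $(z, X)$; indeed in this degenerate case $\widetilde{\mathbb{W}}\eta(z;\cdot) = \widehat\eta(z;\cdot)$. -/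
/-!
The Busemann pseudometric `η̂(z;·)` is the pointwise supremum of the seminorms dominated by
`η(z;·)`, hence itself the largest such seminorm. If it vanishes at some `Y ≠ 0`, it vanishes on
the line `ℂ Y`, which is the kernel of a linear functional on `ℂ²`; a seminorm vanishing on the
kernel of a functional `φ` is `|c φ|` for a constant `c`. So `η̂(z;·) = |ψ|` for a linear functional
`ψ`, and `|ψ|²` is a Hermitian form dominated by `η(z;·)`, giving `η̂ ≤ 𝕎̃η`. Conversely every
dominated Hermitian form is a dominated seminorm (Cauchy–Schwarz), giving `𝕎̃η ≤ η̂`. Upper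
semicontinuity transfers because the two functions agree on `D × ℂ²`.
-/

/-- A positive-semidefinite Hermitian form on a complex module (conjugate-linear in the
first variable). -/
structure HermSemiForm (E : Type*) [AddCommGroup E] [Module ℂ E] where
  toFun : E → E → ℂ
  add_left : ∀ x y z, toFun (x + y) z = toFun x z + toFun y z
  smul_left : ∀ (c : ℂ) (x y : E), toFun (c • x) y = starRingEnd ℂ c * toFun x y
  conj_symm : ∀ x y, toFun y x = starRingEnd ℂ (toFun x y)
  nonneg : ∀ x, 0 ≤ (toFun x x).re

/-- The Busemann pseudometric associated to a pseudometric `η`: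
`η̂(z;X) = sup { p(X) : p a ℂ-seminorm with p ≤ η(z;·) }`. -/
noncomputable def busemann (η : (ℂ × ℂ) → (ℂ × ℂ) → ℝ) (z X : ℂ × ℂ) : ℝ :=
  sSup {r : ℝ | ∃ p : Seminorm ℂ (ℂ × ℂ), (∀ Y, p Y ≤ η z Y) ∧ r = p X}

/-- The Wu pseudometric `𝕎̃η(z;X)`: the supremum of the Hermitian seminorms
dominated by `η(z;·)`, evaluated at `X`. -/
noncomputable def wuTilde (η : (ℂ × ℂ) → (ℂ × ℂ) → ℝ) (z X : ℂ × ℂ) : ℝ :=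
  sSup {r : ℝ | ∃ s : HermSemiForm (ℂ × ℂ),
    (∀ Y, Real.sqrt ((s.toFun Y Y).re) ≤ η z Y) ∧ r = Real.sqrt ((s.toFun X X).re)}

namespace HermSemiForm

variable {E : Type*} [AddCommGroup E] [Module ℂ E]

abbrev toCore (s : HermSemiForm E) : PreInnerProductSpace.Core ℂ E where
  inner := s.toFun
  conj_inner_symm x y := by rw [s.conj_symm x y, Complex.conj_conj]
  re_inner_nonneg := s.nonneg
  add_left := s.add_left
  smul_left x y r := s.smul_left r x y

noncomputable def toSeminorm (s : HermSemiForm E) : Seminorm ℂ E :=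
  -- the triangle inequality and homogeneity of `core` are stated for the norm `√(re ⟪x, x⟫)`
  letI : Norm E := @InnerProductSpace.Core.toNorm ℂ E _ _ _ s.toCore
  have core := InnerProductSpace.Core.toSeminormedSpaceCore s.toCore
  Seminorm.of (fun x => √(s.toFun x x).re) core.norm_triangle core.norm_smul

def ofLinearMap (ψ : E →ₗ[ℂ] ℂ) : HermSemiForm E where
  toFun x y := starRingEnd ℂ (ψ x) * ψ y
  add_left x y w := by rw [map_add, map_add, add_mul]
  smul_left c x y := by rw [map_smul, smul_eq_mul, map_mul, mul_assoc]
  conj_symm x y := by rw [map_mul, Complex.conj_conj, mul_comm]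
  nonneg x := by
    rw [← Complex.normSq_eq_conj_mul_self, Complex.ofReal_re]
    exact Complex.normSq_nonneg _

theorem sqrt_re_ofLinearMap_self (ψ : E →ₗ[ℂ] ℂ) (x : E) :
    √((ofLinearMap ψ).toFun x x).re = ‖ψ x‖ := by
  simp only [ofLinearMap, ← Complex.normSq_eq_conj_mul_self, Complex.ofReal_re, Complex.norm_def]

end HermSemiForm

theorem Seminorm.exists_eq_norm_of_ker_le {𝕜 E : Type*} [RCLike 𝕜] [AddCommGroup E] [Module 𝕜 E]
    (p : Seminorm 𝕜 E) {φ : E →ₗ[𝕜] 𝕜} (hφ : φ ≠ 0) (hker : ∀ w, φ w = 0 → p w = 0) :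
    ∃ ψ : E →ₗ[𝕜] 𝕜, ∀ x, p x = ‖ψ x‖ := by
  obtain ⟨e, he⟩ : ∃ e, φ e = 1 := by
    obtain ⟨v, hv⟩ := not_forall.mp fun h => hφ (LinearMap.ext h)
    exact ⟨(φ v)⁻¹ • v, by rw [map_smul, smul_eq_mul, inv_mul_cancel₀ hv]⟩
  refine ⟨(p e : 𝕜) • φ, fun x => ?_⟩
  have hw : p (x - φ x • e) = 0 := hker _ (by simp [he])
  have hx : p x = p (φ x • e) := by
    refine le_antisymm ?_ ?_
    · simpa [hw] using map_add_le_add p (φ x • e) (x - φ x • e)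
    · simpa [hw] using map_sub_le_add p x (x - φ x • e)
  rw [hx, map_smul_eq_mul, LinearMap.smul_apply, smul_eq_mul, norm_mul, RCLike.norm_ofReal,
    abs_of_nonneg (apply_nonneg p e), mul_comm]

def crossFunctional (Y : ℂ × ℂ) : ℂ × ℂ →ₗ[ℂ] ℂ :=
  Y.2 • LinearMap.fst ℂ ℂ ℂ - Y.1 • LinearMap.snd ℂ ℂ ℂ

@[simp]
theorem crossFunctional_apply (Y X : ℂ × ℂ) : crossFunctional Y X = Y.2 * X.1 - Y.1 * X.2 :=
  rfl

theorem crossFunctional_ne_zero {Y : ℂ × ℂ} (hY : Y ≠ 0) : crossFunctional Y ≠ 0 := by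
  intro h
  have h1 := LinearMap.congr_fun h (1, 0)
  have h2 := LinearMap.congr_fun h (0, 1)
  simp only [crossFunctional_apply, mul_one, mul_zero, sub_zero, zero_sub, neg_eq_zero,
    LinearMap.zero_apply] at h1 h2
  exact hY (Prod.ext h2 h1)

theorem exists_smul_eq_of_crossFunctional_eq_zero {Y w : ℂ × ℂ} (hY : Y ≠ 0)
    (hw : crossFunctional Y w = 0) : ∃ c : ℂ, w = c • Y := by
  rw [crossFunctional_apply, sub_eq_zero] at hw
  rcases eq_or_ne Y.1 0 with h1 | h1
  · have h2 : Y.2 ≠ 0 := fun h2 => hY (Prod.ext h1 h2)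
    refine ⟨w.2 / Y.2, Prod.ext ?_ ?_⟩
    · simpa [h1, h2] using hw
    · simp [h2]
  · refine ⟨w.1 / Y.1, Prod.ext ?_ ?_⟩
    · simp [h1]
    · simp only [Prod.smul_snd, smul_eq_mul]
      field_simp
      linear_combination -hw

theorem Seminorm.exists_eq_norm_of_apply_eq_zero (p : Seminorm ℂ (ℂ × ℂ)) {Y : ℂ × ℂ}
    (hY : Y ≠ 0) (hpY : p Y = 0) : ∃ ψ : ℂ × ℂ →ₗ[ℂ] ℂ, ∀ X, p X = ‖ψ X‖ := by
  refine p.exists_eq_norm_of_ker_le (crossFunctional_ne_zero hY) fun w hw => ?_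
  obtain ⟨c, rfl⟩ := exists_smul_eq_of_crossFunctional_eq_zero hY hw
  rw [map_smul_eq_mul, hpY, mul_zero]

section Busemann

variable (η : (ℂ × ℂ) → (ℂ × ℂ) → ℝ) (z : ℂ × ℂ)

noncomputable def busemannSeminorm : Seminorm ℂ (ℂ × ℂ) :=
  sSup {p | ⇑p ≤ η z}

theorem coe_busemannSeminorm : ⇑(busemannSeminorm η z) = busemann η z := by
  have hbdd : BddAbove (((↑) : Seminorm ℂ (ℂ × ℂ) → (ℂ × ℂ) → ℝ) '' {p | ⇑p ≤ η z}) :=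
    ⟨η z, by rintro _ ⟨p, hp, rfl⟩; exact hp⟩
  ext X
  rw [busemannSeminorm, Seminorm.coe_sSup_eq' hbdd, iSup_apply, iSup, busemann]
  congr 1
  ext r
  simp only [Set.mem_range, Subtype.exists, Set.mem_ofPred_eq, exists_prop, Pi.le_def, eq_comm]

variable {η z}

theorem Seminorm.le_busemann {p : Seminorm ℂ (ℂ × ℂ)} (hp : ⇑p ≤ η z) (X : ℂ × ℂ) :
    p X ≤ busemann η z X :=
  le_csSup ⟨η z X, by rintro _ ⟨q, hq, rfl⟩; exact hq X⟩ ⟨p, hp, rfl⟩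

theorem busemann_le (hη : 0 ≤ η z) (X : ℂ × ℂ) : busemann η z X ≤ η z X :=
  csSup_le ⟨0, 0, hη, rfl⟩ fun _ ⟨_, hp, hr⟩ => hr ▸ hp X

theorem wuTilde_le_busemann (X : ℂ × ℂ) : wuTilde η z X ≤ busemann η z X := by
  refine Real.sSup_le ?_ (coe_busemannSeminorm η z ▸ apply_nonneg _ X)
  rintro _ ⟨s, hs, rfl⟩
  exact s.toSeminorm.le_busemann hs X

theorem busemann_le_wuTilde_of_eq_norm (hη : 0 ≤ η z) {ψ : ℂ × ℂ →ₗ[ℂ] ℂ}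
    (hψ : ∀ Y, busemann η z Y = ‖ψ Y‖) (X : ℂ × ℂ) : busemann η z X ≤ wuTilde η z X := by
  refine le_csSup ⟨η z X, by rintro _ ⟨s, hs, rfl⟩; exact hs X⟩
    ⟨HermSemiForm.ofLinearMap ψ, fun Y => ?_, ?_⟩
  · rw [HermSemiForm.sqrt_re_ofLinearMap_self, ← hψ]; exact busemann_le hη Y
  · rw [HermSemiForm.sqrt_re_ofLinearMap_self, hψ]

end Busemann

theorem wuTilde_eq_busemann_degenerate_general (D : Set (ℂ × ℂ))
    (η : (ℂ × ℂ) → (ℂ × ℂ) → ℝ)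
    (hηpos : ∀ z X, 0 ≤ η z X)
    (hdeg : ∀ z ∈ D, ∃ Y : ℂ × ℂ, Y ≠ 0 ∧ busemann η z Y = 0) :
    ∀ z ∈ D, ∀ X : ℂ × ℂ,
      wuTilde η z X = busemann η z X ∧
      (UpperSemicontinuousWithinAt (fun p : (ℂ × ℂ) × (ℂ × ℂ) => busemann η p.1 p.2)
          (D ×ˢ (Set.univ : Set (ℂ × ℂ))) (z, X) →
        UpperSemicontinuousWithinAt (fun p : (ℂ × ℂ) × (ℂ × ℂ) => wuTilde η p.1 p.2)
          (D ×ˢ (Set.univ : Set (ℂ × ℂ))) (z, X)) := by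
  have hEq : ∀ z ∈ D, ∀ X, wuTilde η z X = busemann η z X := by
    intro z hz X
    obtain ⟨Y, hY, hbY⟩ := hdeg z hz
    obtain ⟨ψ, hψ⟩ := (busemannSeminorm η z).exists_eq_norm_of_apply_eq_zero hY
      (by rwa [coe_busemannSeminorm])
    rw [coe_busemannSeminorm] at hψ
    exact (wuTilde_le_busemann X).antisymm (busemann_le_wuTilde_of_eq_norm (hηpos z) hψ X)
  intro z hz X
  refine ⟨hEq z hz X, fun hb => hb.congr_of_eventuallyEq ⟨hz, trivial⟩ ?_⟩
  exact eventuallyEq_nhdsWithin_of_eqOn fun p hp => (hEq p.1 hp.1 p.2).symm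

/-- Let `D ⊂ ℂ²` be a domain and `η` a pseudometric on `D` such that at every point the
Busemann pseudometric `η̂(z;·)` has a nontrivial zero.  Then `𝕎̃η(z;·) = η̂(z;·)`, and
upper semicontinuity of `η̂` at `(z,X)` implies upper semicontinuity of `𝕎̃η` there. -/
theorem wuTilde_eq_busemann_degenerate (D : Set (ℂ × ℂ)) (hD : IsOpen D)
    (hDconn : IsConnected D)
    (η : (ℂ × ℂ) → (ℂ × ℂ) → ℝ)
    (hηpos : ∀ z X, 0 ≤ η z X)
    (hηhom : ∀ z ∈ D, ∀ (c : ℂ) (X : ℂ × ℂ), η z (c • X) = ‖c‖ * η z X)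
    (hηbdd : ∀ z ∈ D, ∃ M : ℝ, ∀ X, η z X ≤ M * ‖X‖)
    (hdeg : ∀ z ∈ D, ∃ Y : ℂ × ℂ, Y ≠ 0 ∧ busemann η z Y = 0) :
    ∀ z ∈ D, ∀ X : ℂ × ℂ,
      wuTilde η z X = busemann η z X ∧
      (UpperSemicontinuousWithinAt (fun p : (ℂ × ℂ) × (ℂ × ℂ) => busemann η p.1 p.2)
          (D ×ˢ (Set.univ : Set (ℂ × ℂ))) (z, X) →
        UpperSemicontinuousWithinAt (fun p : (ℂ × ℂ) × (ℂ × ℂ) => wuTilde η p.1 p.2)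
          (D ×ˢ (Set.univ : Set (ℂ × ℂ))) (z, X)) :=
  wuTilde_eq_busemann_degenerate_general D η hηpos hdeg
end

section
/- Let $\alpha = (\alpha_1, \dots, \alpha_n) \in (0,\infty)^n$ and $D_\alpha = \{z \in \mathbb{C}^n : |z_1|^{\alpha_1} \cdots |z_n|^{\alpha_n} < 1\}$. Let $a \in D_\alpha$ with $a_1 \cdots a_{n-1} \neq 0$ and $a_n = 0$, and set $r = \alpha_n$. Then for $X \in \mathbb{C}^n$, the Kobayashi–Royden metric satisfies $\kappa_{D_\alpha}(a; X) \leq \big( |a_1|^{\alpha_1} \cdots |a_{n-1}|^{\alpha_{n-1}} |X_n|^{\alpha_n} \big)^{1/r}$. -/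
open scoped Real

/-- The Kobayashi–Royden pseudometric of a domain `D ⊂ ℂⁿ`. -/
noncomputable def kobayashiRoyden {n : ℕ} (D : Set (Fin n → ℂ)) (a X : Fin n → ℂ) : ℝ :=
  sInf {t : ℝ | 0 < t ∧ ∃ φ : ℂ → (Fin n → ℂ), DifferentiableOn ℂ φ (Metric.ball 0 1) ∧
    (∀ l ∈ Metric.ball (0 : ℂ) 1, φ l ∈ D) ∧ φ 0 = a ∧
    t • derivWithin φ (Metric.ball 0 1) 0 = X}

/-!
The disc with coordinates `a_j e^{λ w_j}` (`j ≠ i`) and `c λ e^{λ w_i}` passes through `a`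
(where `a_i = 0`) with velocity `(a_j w_j)_{j ≠ i}` and `c`, so any tangent vector is reached
by choosing `w_j = X_j / (t a_j)` and `c = X_i / t`. The remaining coordinate `w_i` is chosen so
that `∑ α_j w_j = 0`: then the exponential factors drop out of `∏ |z_j|^{α_j}`, which along the
disc equals `∏_{j ≠ i} |a_j|^{α_j} · |c λ|^{α_i}`, and this is `< 1` on the unit disc as soon
as `t^{α_i} > ∏_{j ≠ i} |a_j|^{α_j} · |X_i|^{α_i}`.
-/

open Finset

theorem kobayashiRoyden_le_of_hasDerivAt {n : ℕ} {D : Set (Fin n → ℂ)} {a X φ' : Fin n → ℂ}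
    {t : ℝ} (ht : 0 < t) {φ : ℂ → Fin n → ℂ} (hφ : DifferentiableOn ℂ φ (Metric.ball 0 1))
    (hφD : ∀ l ∈ Metric.ball (0 : ℂ) 1, φ l ∈ D) (hφ0 : φ 0 = a) (hφ' : HasDerivAt φ φ' 0)
    (hX : t • φ' = X) : kobayashiRoyden D a X ≤ t := by
  refine csInf_le ⟨0, fun s hs => hs.1.le⟩ ⟨ht, φ, hφ, hφD, hφ0, ?_⟩
  rwa [hφ'.hasDerivWithinAt.derivWithin
    (Metric.isOpen_ball.uniqueDiffWithinAt (Metric.mem_ball_self one_pos))]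

theorem prod_norm_mul_exp_rpow {ι : Type*} (s : Finset ι) (z w : ι → ℂ) (α : ι → ℝ) :
    ∏ j ∈ s, ‖z j * Complex.exp (w j)‖ ^ α j =
      (∏ j ∈ s, ‖z j‖ ^ α j) * Real.exp (∑ j ∈ s, α j * (w j).re) := by
  simp only [norm_mul, Complex.norm_exp, Real.exp_sum, ← prod_mul_distrib]
  refine prod_congr rfl fun j _ => ?_
  rw [Real.mul_rpow (norm_nonneg _) (Real.exp_nonneg _), ← Real.exp_mul, mul_comm (w j).re]

theorem exists_sum_mul_update_eq_zero {ι K : Type*} [Fintype ι] [DecidableEq ι] [Field K]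
    (α u : ι → K) {i : ι} (hi : α i ≠ 0) : ∃ c, ∑ j, α j * Function.update u i c j = 0 := by
  refine ⟨-(∑ j ∈ univ.erase i, α j * u j) / α i, ?_⟩
  have hrest : ∀ c, ∑ j ∈ univ.erase i, α j * Function.update u i c j =
      ∑ j ∈ univ.erase i, α j * u j := fun c =>
    sum_congr rfl fun j hj => by rw [Function.update_of_ne (ne_of_mem_erase hj)]
  rw [← add_sum_erase _ _ (mem_univ i), Function.update_self, hrest]
  field_simp
  ring

section TwistedLine

variable {ι : Type*} (p v w : ι → ℂ)

noncomputable def twistedLine (l : ℂ) : ι → ℂ :=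
  fun j => (p j + l * v j) * Complex.exp (l * w j)

@[simp]
theorem twistedLine_zero : twistedLine p v w 0 = p := by
  ext j
  simp [twistedLine]

theorem differentiable_twistedLine [Fintype ι] : Differentiable ℂ (twistedLine p v w) :=
  differentiable_pi.mpr fun j => by unfold twistedLine; fun_prop

theorem hasDerivAt_twistedLine_zero [Fintype ι] :
    HasDerivAt (twistedLine p v w) (v + p * w) 0 := by
  refine hasDerivAt_pi.mpr fun j => ?_
  have hline : HasDerivAt (fun l : ℂ => p j + l * v j) (v j) 0 := by
    simpa using ((hasDerivAt_id (0 : ℂ)).mul_const (v j)).const_add (p j)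
  have hexp : HasDerivAt (fun l : ℂ => Complex.exp (l * w j)) (w j) 0 := by
    simpa using ((hasDerivAt_id (0 : ℂ)).mul_const (w j)).cexp
  exact hline.mul hexp |>.congr_deriv (by simp)

theorem prod_norm_twistedLine_rpow [Fintype ι] (α : ι → ℝ)
    (hw : ∑ j, (α j : ℂ) * w j = 0) (l : ℂ) :
    ∏ j, ‖twistedLine p v w l j‖ ^ α j = ∏ j, ‖p j + l * v j‖ ^ α j := by
  have hre : ∑ j, α j * (l * w j).re = 0 := by
    have := congrArg (fun z => (l * z).re) hw
    simpa [mul_sum, Complex.re_sum, mul_left_comm (l : ℂ)] using this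
  unfold twistedLine
  rw [prod_norm_mul_exp_rpow, hre, Real.exp_zero, mul_one]

end TwistedLine

theorem prod_norm_add_mul_single_rpow {ι : Type*} [Fintype ι] [DecidableEq ι] (α : ι → ℝ)
    {p : ι → ℂ} {i : ι} (hpi : p i = 0) (c l : ℂ) :
    ∏ j, ‖p j + l * (Pi.single i c : ι → ℂ) j‖ ^ α j =
      (∏ j ∈ univ.erase i, ‖p j‖ ^ α j) * ‖l * c‖ ^ α i := by
  rw [← mul_prod_erase _ _ (mem_univ i), mul_comm, hpi, Pi.single_eq_same, zero_add]
  congr 1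
  exact prod_congr rfl fun j hj => by rw [Pi.single_eq_of_ne (ne_of_mem_erase hj), mul_zero,
    add_zero]

theorem kobayashiRoyden_reinhardt_le {n : ℕ} (α : Fin n → ℝ) {i : Fin n} (hαi : 0 < α i)
    {a : Fin n → ℂ} (ha : ∀ j ≠ i, a j ≠ 0) (hai : a i = 0) (X : Fin n → ℂ) {t : ℝ}
    (ht : 0 < t) (hlt : (∏ j ∈ univ.erase i, ‖a j‖ ^ α j) * ‖X i‖ ^ α i < t ^ α i) :
    kobayashiRoyden {z : Fin n → ℂ | ∏ j, ‖z j‖ ^ α j < 1} a X ≤ t := by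
  set M := ∏ j ∈ univ.erase i, ‖a j‖ ^ α j
  have htC : (t : ℂ) ≠ 0 := Complex.ofReal_ne_zero.mpr ht.ne'
  obtain ⟨c, hc⟩ := exists_sum_mul_update_eq_zero (fun j => (α j : ℂ))
    (fun j => X j / (t * a j)) (Complex.ofReal_ne_zero.mpr hαi.ne')
  set w := Function.update (fun j => X j / (t * a j)) i c
  set v : Fin n → ℂ := Pi.single i (X i / t)
  have hcenter : M * ‖X i / t‖ ^ α i < 1 := by
    rwa [norm_div, Complex.norm_real, Real.norm_of_nonneg ht.le,
      Real.div_rpow (norm_nonneg _) ht.le, ← mul_div_assoc, div_lt_one (by positivity)]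
  refine kobayashiRoyden_le_of_hasDerivAt ht (differentiable_twistedLine a v w).differentiableOn
    (fun l hl => ?_) (twistedLine_zero a v w) (hasDerivAt_twistedLine_zero a v w) ?_
  · have hl1 : ‖l‖ ^ α i ≤ 1 :=
      Real.rpow_le_one (norm_nonneg _) (mem_ball_zero_iff.mp hl).le hαi.le
    show ∏ j, ‖twistedLine a v w l j‖ ^ α j < 1
    rw [prod_norm_twistedLine_rpow a v w α hc, prod_norm_add_mul_single_rpow α hai, norm_mul,
      Real.mul_rpow (norm_nonneg _) (norm_nonneg _)]
    calc M * (‖l‖ ^ α i * ‖X i / t‖ ^ α i) ≤ M * ‖X i / t‖ ^ α i := by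
          gcongr; exact mul_le_of_le_one_left (by positivity) hl1
      _ < 1 := hcenter
  · ext j
    rcases eq_or_ne j i with rfl | hj
    · simp [v, hai, Complex.real_smul, mul_div_cancel₀ _ htC]
    · simp only [v, w, Pi.smul_apply, Pi.add_apply, Pi.mul_apply, Pi.single_eq_of_ne hj,
        Function.update_of_ne hj, zero_add, Complex.real_smul]
      field_simp [ha j hj]

theorem kobayashi_upper_bound_elementary_Reinhardt_general (n : ℕ)
    (α : Fin n → ℝ) (hα : ∀ j, 0 < α j)
    (last : Fin n) (hlast : (last : ℕ) = n - 1)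
    (a : Fin n → ℂ) (ha : ∀ j : Fin n, (j : ℕ) < n - 1 → a j ≠ 0) (han : a last = 0)
    (X : Fin n → ℂ) :
    kobayashiRoyden {z : Fin n → ℂ | ∏ j, ‖z j‖ ^ (α j) < 1} a X ≤
      ((∏ j ∈ Finset.univ.filter (fun j : Fin n => (j : ℕ) < n - 1), ‖a j‖ ^ (α j)) *
        ‖X last‖ ^ (α last)) ^ (1 / α last) := by
  have hlt_iff : ∀ j : Fin n, (j : ℕ) < n - 1 ↔ j ≠ last := fun j => by
    rw [Ne, Fin.ext_iff, hlast]; omega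
  have hfilter : univ.filter (fun j : Fin n => (j : ℕ) < n - 1) = univ.erase last := by
    ext j; simp [hlt_iff]
  rw [hfilter]
  refine le_of_forall_gt_imp_ge_of_dense fun t ht => ?_
  have ht0 : 0 < t := lt_of_le_of_lt (by positivity) ht
  rw [one_div, Real.rpow_inv_lt_iff_of_pos (by positivity) ht0.le (hα last)] at ht
  exact kobayashiRoyden_reinhardt_le α (hα last) (fun j hj => ha j ((hlt_iff j).mpr hj)) han X
    ht0 ht

/-- For the elementary Reinhardt domain `D_α = {z : ∏ |z j|^(α j) < 1}` with all
`α j > 0`, a point `a ∈ D_α` with `a j ≠ 0` for `j < n-1` and `a (n-1) = 0`, and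
`r = α (n-1)`, the Kobayashi–Royden metric satisfies
`κ_{D_α}(a;X) ≤ (∏_{j<n-1} |a j|^(α j) · |X (n-1)|^(α (n-1)))^(1/r)`. -/
theorem kobayashi_upper_bound_elementary_Reinhardt (n : ℕ) (hn : 2 ≤ n)
    (α : Fin n → ℝ) (hα : ∀ j, 0 < α j)
    (last : Fin n) (hlast : (last : ℕ) = n - 1)
    (a : Fin n → ℂ) (ha : ∀ j : Fin n, (j : ℕ) < n - 1 → a j ≠ 0) (han : a last = 0)
    (haD : a ∈ {z : Fin n → ℂ | ∏ j, ‖z j‖ ^ (α j) < 1})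
    (X : Fin n → ℂ) :
    kobayashiRoyden {z : Fin n → ℂ | ∏ j, ‖z j‖ ^ (α j) < 1} a X ≤
      ((∏ j ∈ Finset.univ.filter (fun j : Fin n => (j : ℕ) < n - 1), ‖a j‖ ^ (α j)) *
        ‖X last‖ ^ (α last)) ^ (1 / α last) :=
  kobayashi_upper_bound_elementary_Reinhardt_general n α hα last hlast a ha han X
end

section
/- Define $G_n = G_2 \times \Delta^{n-2} \subset \mathbb{C}^n$ for $n \geq 3$, where $G_2 = \{(z_1,z_2): |z_1|(1+|z_2|) < 1\}$, and let $D_m = G_n \cap \Psi^{-1}(T_m)$ where $T_m = T_{(n/2,\, mn/2,\, n, \dots, n)}$ and $\Psi(z) = (|z_1|^2, \dots, |z_n|^2)$. Then $(D_m)_{m \geq 1}$ is an increasing sequence of open sets with $\bigcup_{m=1}^\infty D_m = G_n$; in particular $G_n \cap B(0, \sqrt{m/2}) \subset D_m$ for every $m$. -/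
/-!
Multiplied by `n`, the inequality defining `D_m` reads
`2 (|z₁|² + |z₂|²/m) + ∑_{j ≥ 3} |z_j|² < n`. On `G_n` the tail sum is at most `n - 2`, and if
moreover `|z|² < m/2`, then `|z₁|(1 + |z₂|) < 1` forces `|z₁|² + |z₂|²/m < 1`: either
`|z₁|² ≤ 1/2`, or `|z₂| < (1 - |z₁|)/|z₁|` is small. Since every point of `G_n` lies in some ball
`B(0, √(m/2))`, the `D_m` exhaust `G_n`; they increase because `b_m` does.
-/

theorem sq_add_sq_div_lt_one {a c m : ℝ} (ha : 0 ≤ a) (hc : 0 ≤ c)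
    (hG : a * (1 + c) < 1) (hball : a ^ 2 + c ^ 2 < m / 2) : a ^ 2 + c ^ 2 / m < 1 := by
  have hm : 0 < m := by nlinarith
  suffices m * a ^ 2 + c ^ 2 < m by
    have : c ^ 2 / m < 1 - a ^ 2 := by rw [div_lt_iff₀ hm]; linarith
    linarith
  rcases le_or_gt (a ^ 2) (1 / 2) with h | h
  · nlinarith
  · have ha1 : a < 1 := by nlinarith
    have hm1 : 1 < m := by nlinarith
    have hac : (a * c) ^ 2 < (1 - a) ^ 2 :=
      pow_lt_pow_left₀ (by linarith) (by positivity) two_ne_zero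
    calc m * a ^ 2 + c ^ 2 < m * a ^ 2 + 2 * (1 - a) ^ 2 := by nlinarith
      _ ≤ m * a ^ 2 + (1 - a ^ 2) := by nlinarith
      _ < m := by nlinarith [mul_lt_mul_of_pos_right hm1 (by nlinarith : (0 : ℝ) < 1 - a ^ 2)]

namespace GnExhaustion

/-! `G k` and `D k m` are the paper's `G_n` and `D_m` for `n = k + 2`, with coordinates indexed
from `0`. -/

def G (k : ℕ) : Set (Fin (k + 2) → ℂ) :=
  {z | ‖z 0‖ * (1 + ‖z 1‖) < 1 ∧ ∀ j : Fin (k + 2), 2 ≤ (j : ℕ) → ‖z j‖ < 1}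

noncomputable def weight (n m : ℕ) (j : Fin n) : ℝ :=
  if (j : ℕ) = 0 then (n : ℝ) / 2 else if (j : ℕ) = 1 then (m : ℝ) * n / 2 else (n : ℝ)

def D (k m : ℕ) : Set (Fin (k + 2) → ℂ) :=
  G k ∩ {z | ∑ j, ‖z j‖ ^ 2 / weight (k + 2) m j < 1}

section weight

variable (k m : ℕ)

@[simp] theorem weight_zero : weight (k + 2) m 0 = ((k + 2 : ℕ) : ℝ) / 2 := by simp [weight]

@[simp] theorem weight_one : weight (k + 2) m 1 = m * ((k + 2 : ℕ) : ℝ) / 2 := by simp [weight]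

@[simp] theorem weight_succ_succ (i : Fin k) : weight (k + 2) m i.succ.succ = (k + 2 : ℕ) := by
  simp [weight]

end weight

variable {k : ℕ}

theorem isOpen_G : IsOpen (G k) := by
  simp only [G, Set.ofPred_and, Set.ofPred_forall]
  exact (isOpen_lt (by fun_prop) continuous_const).inter <|
    isOpen_iInter_of_finite fun _ => isOpen_iInter_of_finite fun _ =>
      isOpen_lt (by fun_prop) continuous_const

theorem isOpen_D (m : ℕ) : IsOpen (D k m) :=
  isOpen_G.inter (isOpen_lt (by fun_prop) continuous_const)

theorem natCast_mul_sum_div_weight (m : ℕ) (z : Fin (k + 2) → ℂ) :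
    ((k + 2 : ℕ) : ℝ) * ∑ j, ‖z j‖ ^ 2 / weight (k + 2) m j =
      2 * (‖z 0‖ ^ 2 + ‖z 1‖ ^ 2 / m) + ∑ i : Fin k, ‖z i.succ.succ‖ ^ 2 := by
  simp only [Fin.sum_univ_succ, Fin.succ_zero_eq_one, weight_zero, weight_one, weight_succ_succ,
    mul_add, Finset.mul_sum, ← add_assoc]
  congr 2
  · field_simp
  · rcases eq_or_ne (m : ℝ) 0 with hm | hm
    · simp [hm]
    · field_simp
  · field_simp

theorem mem_D_iff {m : ℕ} {z : Fin (k + 2) → ℂ} :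
    z ∈ D k m ↔ z ∈ G k ∧
      2 * (‖z 0‖ ^ 2 + ‖z 1‖ ^ 2 / m) + ∑ i : Fin k, ‖z i.succ.succ‖ ^ 2 < k + 2 := by
  rw [D, Set.mem_inter_iff, Set.mem_ofPred_eq, ← natCast_mul_sum_div_weight,
    ← mul_lt_mul_iff_right₀ (by positivity : (0 : ℝ) < (k + 2 : ℕ)), mul_one]
  push_cast
  rfl

theorem D_mono {m m' : ℕ} (hm : 1 ≤ m) (hmm' : m ≤ m') : D k m ⊆ D k m' := by
  intro z hz
  rw [mem_D_iff] at hz ⊢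
  refine ⟨hz.1, lt_of_le_of_lt ?_ hz.2⟩
  gcongr

theorem sum_norm_sq_succ_succ_le {z : Fin (k + 2) → ℂ} (hz : z ∈ G k) :
    ∑ i : Fin k, ‖z i.succ.succ‖ ^ 2 ≤ k := by
  have hle : ∀ i : Fin k, ‖z i.succ.succ‖ ^ 2 ≤ 1 := fun i =>
    pow_le_one₀ (norm_nonneg _) (hz.2 _ (by simp)).le
  simpa using Finset.sum_le_sum fun i (_ : i ∈ Finset.univ) => hle i

theorem G_inter_subset_D (m : ℕ) :
    G k ∩ {z | ∑ j, ‖z j‖ ^ 2 < (m : ℝ) / 2} ⊆ D k m := by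
  rintro z ⟨hzG, hzball⟩
  have hfirst : ‖z 0‖ ^ 2 + ‖z 1‖ ^ 2 < (m : ℝ) / 2 := by
    refine lt_of_le_of_lt ?_ hzball
    simp only [Fin.sum_univ_succ, Fin.succ_zero_eq_one, ← add_assoc]
    exact le_add_of_nonneg_right (Finset.sum_nonneg fun i _ => by positivity)
  have h1 : ‖z 0‖ ^ 2 + ‖z 1‖ ^ 2 / m < 1 :=
    sq_add_sq_div_lt_one (norm_nonneg _) (norm_nonneg _) hzG.1 hfirst
  rw [mem_D_iff]
  refine ⟨hzG, ?_⟩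
  have h2 := sum_norm_sq_succ_succ_le hzG
  linarith

theorem iUnion_D_succ : ⋃ m, D k (m + 1) = G k := by
  refine subset_antisymm (Set.iUnion_subset fun m => Set.inter_subset_left) fun z hz => ?_
  obtain ⟨m, hm⟩ := exists_nat_gt (2 * ∑ j, ‖z j‖ ^ 2)
  refine Set.mem_iUnion.2 ⟨m, G_inter_subset_D _ ⟨hz, ?_⟩⟩
  rw [Set.mem_ofPred_eq, Nat.cast_succ]
  linarith

end GnExhaustion

/-- Let `Gₙ = G₂ × Δ^{n-2}` and `Dₘ = Gₙ ∩ Ψ⁻¹(T_{(n/2, mn/2, n, …, n)})`, where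
`Ψ(z) = (|z₁|²,…,|zₙ|²)`.  Then `(Dₘ)` is an increasing sequence of open sets with
`⋃ₘ Dₘ = Gₙ`; in particular `Gₙ ∩ B(0, √(m/2)) ⊆ Dₘ` for every `m ≥ 1`. -/
theorem exhaustion_of_Gn (n : ℕ) (hn : 3 ≤ n)
    (Gn : Set (Fin n → ℂ))
    (hGn : Gn = {z : Fin n → ℂ | ‖z ⟨0, by omega⟩‖ * (1 + ‖z ⟨1, by omega⟩‖) < 1 ∧
      ∀ j : Fin n, 2 ≤ (j : ℕ) → ‖z j‖ < 1})
    (b : ℕ → Fin n → ℝ)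
    (hb : b = fun (m : ℕ) (j : Fin n) => if (j : ℕ) = 0 then (n : ℝ) / 2
      else if (j : ℕ) = 1 then (m : ℝ) * n / 2 else (n : ℝ))
    (D : ℕ → Set (Fin n → ℂ))
    (hD : D = fun m => Gn ∩ {z : Fin n → ℂ | ∑ j, ‖z j‖ ^ 2 / b m j < 1}) :
    (∀ m : ℕ, 1 ≤ m → IsOpen (D m)) ∧
    (∀ m : ℕ, 1 ≤ m → D m ⊆ D (m + 1)) ∧
    (⋃ m : ℕ, D (m + 1)) = Gn ∧
    (∀ m : ℕ, 1 ≤ m →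
      Gn ∩ {z : Fin n → ℂ | ∑ j, ‖z j‖ ^ 2 < (m : ℝ) / 2} ⊆ D m) := by
  obtain ⟨k, rfl⟩ : ∃ k, n = k + 2 := ⟨n - 2, by omega⟩
  obtain rfl : Gn = GnExhaustion.G k := hGn
  obtain rfl : b = GnExhaustion.weight (k + 2) := hb
  obtain rfl : D = GnExhaustion.D k := hD
  exact ⟨fun m _ => GnExhaustion.isOpen_D m, fun m hm => GnExhaustion.D_mono hm m.le_succ,
    GnExhaustion.iUnion_D_succ, fun m _ => GnExhaustion.G_inter_subset_D m⟩
end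

section
/- Let $n \geq 3$ and $m \geq 1$. The simplex $T_m = T_{(n/2,\, mn/2,\, n, \dots, n)} \subset \mathbb{R}_{\geq 0}^n$ has the smallest volume among all simplices $T_b$, $b \in (0,\infty)^n$, whose closures contain both points $(1, 0, 1, \dots, 1)$ and $(0, m, 1, \dots, 1)$, and it is the unique such minimizer. -/
/-!
With the weights `w = (1, m, 2, …, 2)` the two constraints add up to `∑ j, w j / b j ≤ 2`.
Putting `y j = (n * w j / 2) / b j`, this reads `∑ j, y j ≤ n`, so AM-GM gives `∏ j, y j ≤ 1`,
i.e. `∏ j, c j ≤ ∏ j, b j` for `c j = n * w j / 2`, with equality only if every `y j = 1`.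
-/

open Finset

namespace Real

variable {ι : Type*} {s : Finset ι} {y : ι → ℝ}

theorem prod_le_one_of_sum_le_card (hy : ∀ i ∈ s, 0 ≤ y i) (h : ∑ i ∈ s, y i ≤ #s) :
    ∏ i ∈ s, y i ≤ 1 := by
  rcases s.eq_empty_or_nonempty with rfl | hs
  · simp
  have hw : ∑ _i ∈ s, (#s : ℝ)⁻¹ = 1 := by simp [hs.card_pos.ne']
  have amgm := geom_mean_le_arith_mean_weighted s (fun _ ↦ (#s : ℝ)⁻¹) y
    (fun _ _ ↦ by positivity) hw hy
  rw [finsetProd_rpow s y hy, ← mul_sum] at amgm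
  rw [← rpow_inv_natCast_pow (prod_nonneg hy) hs.card_pos.ne']
  exact pow_le_one₀ (rpow_nonneg (prod_nonneg hy) _)
    (amgm.trans (inv_mul_le_one_of_le₀ h (by positivity)))

theorem eq_one_of_prod_eq_one_of_sum_le_card (hy : ∀ i ∈ s, 0 ≤ y i)
    (h : ∑ i ∈ s, y i ≤ #s) (hprod : ∏ i ∈ s, y i = 1) : ∀ i ∈ s, y i = 1 := by
  rcases s.eq_empty_or_nonempty with rfl | hs
  · simp
  have hw : ∑ _i ∈ s, (#s : ℝ)⁻¹ = 1 := by simp [hs.card_pos.ne']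
  have amgm := geom_mean_le_arith_mean_weighted s (fun _ ↦ (#s : ℝ)⁻¹) y
    (fun _ _ ↦ by positivity) hw hy
  have hgm : ∏ i ∈ s, y i ^ (#s : ℝ)⁻¹ = 1 := by rw [finsetProd_rpow s y hy, hprod, one_rpow]
  have ham : ∑ i ∈ s, (#s : ℝ)⁻¹ * y i = 1 := by
    rw [← mul_sum] at amgm ⊢
    exact le_antisymm (inv_mul_le_one_of_le₀ h (by positivity)) (hgm ▸ amgm)
  have := (geom_mean_eq_arith_mean_weighted_iff_of_pos' s (fun _ ↦ (#s : ℝ)⁻¹) y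
    (fun _ _ ↦ by positivity) hw hy).1 (hgm.trans ham.symm)
  simpa only [ham] using this

end Real

section HarmonicConstraint

variable {ι : Type*} [Fintype ι] {w b : ι → ℝ} {S : ℝ}

theorem sum_mul_card_div_div_le_card (hS : 0 < S) (h : ∑ i, w i / b i ≤ S) :
    ∑ i, w i * Fintype.card ι / S / b i ≤ Fintype.card ι := by
  calc ∑ i, w i * Fintype.card ι / S / b i = Fintype.card ι / S * ∑ i, w i / b i := by
        rw [mul_sum]; congr 1; ext i; ring
    _ ≤ Fintype.card ι / S * S := by gcongr
    _ = Fintype.card ι := div_mul_cancel₀ _ hS.ne'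

theorem prod_mul_card_div_le_prod (hw : ∀ i, 0 ≤ w i) (hb : ∀ i, 0 < b i) (hS : 0 < S)
    (h : ∑ i, w i / b i ≤ S) : ∏ i, w i * Fintype.card ι / S ≤ ∏ i, b i := by
  have hy : ∀ i ∈ univ, 0 ≤ w i * Fintype.card ι / S / b i :=
    fun i _ ↦ by have := hw i; have := hb i; positivity
  calc ∏ i, w i * Fintype.card ι / S
      = (∏ i, w i * Fintype.card ι / S / b i) * ∏ i, b i := by
        rw [← prod_mul_distrib]; congr 1; ext i; rw [div_mul_cancel₀ _ (hb i).ne']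
    _ ≤ ∏ i, b i := mul_le_of_le_one_left (prod_pos fun i _ ↦ hb i).le
        (Real.prod_le_one_of_sum_le_card hy (by simpa using sum_mul_card_div_div_le_card hS h))

theorem eq_mul_card_div_of_prod_eq (hw : ∀ i, 0 ≤ w i) (hb : ∀ i, 0 < b i) (hS : 0 < S)
    (h : ∑ i, w i / b i ≤ S) (heq : ∏ i, b i = ∏ i, w i * Fintype.card ι / S) :
    b = fun i ↦ w i * Fintype.card ι / S := by
  have hy : ∀ i ∈ univ, 0 ≤ w i * Fintype.card ι / S / b i :=
    fun i _ ↦ by have := hw i; have := hb i; positivity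
  have hprod : ∏ i, w i * Fintype.card ι / S / b i = 1 := by
    rw [prod_div_distrib, ← heq, div_self (prod_pos fun i _ ↦ hb i).ne']
  have hone := Real.eq_one_of_prod_eq_one_of_sum_le_card hy
    (by simpa using sum_mul_card_div_div_le_card hS h) hprod
  ext i
  exact (div_eq_one_iff_eq (hb i).ne').1 (hone i (mem_univ i)) |>.symm

end HarmonicConstraint

theorem Fin.sum_univ_eq_add_add_sum_two_le {M : Type*} [AddCommMonoid M] {n : ℕ}
    (f : Fin n → M) {i₀ i₁ : Fin n} (hi₀ : (i₀ : ℕ) = 0) (hi₁ : (i₁ : ℕ) = 1) :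
    ∑ j, f j = f i₀ + f i₁ + ∑ j ∈ univ.filter (fun j : Fin n ↦ 2 ≤ (j : ℕ)), f j := by
  have hpair : univ.filter (fun j : Fin n ↦ ¬ 2 ≤ (j : ℕ)) = {i₀, i₁} := by
    ext j; simp only [mem_filter, mem_univ, true_and, mem_insert, mem_singleton, Fin.ext_iff]; omega
  rw [← sum_filter_not_add_sum_filter univ (fun j : Fin n ↦ 2 ≤ (j : ℕ)), hpair,
    sum_pair (by simp [Fin.ext_iff, hi₀, hi₁])]

def constraintWeight {n : ℕ} (m : ℝ) (j : Fin n) : ℝ :=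
  if (j : ℕ) = 0 then 1 else if (j : ℕ) = 1 then m else 2

theorem constraintWeight_pos {n : ℕ} {m : ℝ} (hm : 0 < m) (j : Fin n) :
    0 < constraintWeight m j := by
  unfold constraintWeight; split_ifs <;> linarith

theorem sum_constraintWeight_div {n : ℕ} (m : ℝ) (b : Fin n → ℝ) {i₀ i₁ : Fin n}
    (hi₀ : (i₀ : ℕ) = 0) (hi₁ : (i₁ : ℕ) = 1) :
    ∑ j, constraintWeight m j / b j =
      (1 / b i₀ + ∑ j ∈ univ.filter (fun j : Fin n ↦ 2 ≤ (j : ℕ)), 1 / b j) +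
        (m / b i₁ + ∑ j ∈ univ.filter (fun j : Fin n ↦ 2 ≤ (j : ℕ)), 1 / b j) := by
  have hF : ∑ j ∈ univ.filter (fun j : Fin n ↦ 2 ≤ (j : ℕ)), constraintWeight m j / b j =
      ∑ j ∈ univ.filter (fun j : Fin n ↦ 2 ≤ (j : ℕ)), (1 / b j + 1 / b j) := by
    refine sum_congr rfl fun j hj ↦ ?_
    rw [mem_filter] at hj
    rw [constraintWeight, if_neg (by omega), if_neg (by omega)]
    ring
  rw [Fin.sum_univ_eq_add_add_sum_two_le _ hi₀ hi₁, hF, sum_add_distrib]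
  simp only [constraintWeight, hi₀, hi₁, if_pos, one_ne_zero, if_false]
  ring

theorem simplex_min_Tm_general (n : ℕ) (m : ℝ) (hm : 1 ≤ m)
    (i₀ : Fin n) (hi₀ : (i₀ : ℕ) = 0) (i₁ : Fin n) (hi₁ : (i₁ : ℕ) = 1)
    (c : Fin n → ℝ)
    (hc : c = fun j : Fin n => if (j : ℕ) = 0 then (n : ℝ) / 2
      else if (j : ℕ) = 1 then m * n / 2 else (n : ℝ)) :
    ((∀ j, 0 < c j) ∧
      1 / c i₀ + ∑ j ∈ Finset.univ.filter (fun j : Fin n => 2 ≤ (j : ℕ)), 1 / c j ≤ 1 ∧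
      m / c i₁ + ∑ j ∈ Finset.univ.filter (fun j : Fin n => 2 ≤ (j : ℕ)), 1 / c j ≤ 1) ∧
    (∀ b : Fin n → ℝ, (∀ j, 0 < b j) →
      1 / b i₀ + ∑ j ∈ Finset.univ.filter (fun j : Fin n => 2 ≤ (j : ℕ)), 1 / b j ≤ 1 →
      m / b i₁ + ∑ j ∈ Finset.univ.filter (fun j : Fin n => 2 ≤ (j : ℕ)), 1 / b j ≤ 1 →
      (∏ j, c j) ≤ (∏ j, b j) ∧ ((∏ j, b j) = (∏ j, c j) → b = c)) := by
  set w : Fin n → ℝ := constraintWeight m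
  have hn : (0 : ℝ) < n := by exact_mod_cast i₀.pos
  have hw : ∀ j, 0 < w j := constraintWeight_pos (by linarith)
  have hcw : c = fun j ↦ w j * Fintype.card (Fin n) / 2 := by
    subst hc; ext j; simp only [w, constraintWeight, Fintype.card_fin]; split_ifs <;> ring
  have hsum := fun b ↦ sum_constraintWeight_div m b hi₀ hi₁
  have hc₀ : 1 / c i₀ = 2 / n := by simp [hc, hi₀]
  have hc₁ : m / c i₁ = 2 / n := by
    simp only [hc, hi₁, one_ne_zero, if_false, if_true]; field_simp
  -- at `c` both constraints are tight: their left sides agree and add up to `∑ j, w j / c j = 2`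
  have hcsum : ∑ j, w j / c j = 2 := by
    simp only [hcw, Fintype.card_fin]
    rw [sum_congr rfl fun j _ ↦ show w j / (w j * n / 2) = 2 / n by field_simp [(hw j).ne']]
    rw [sum_const, card_univ, Fintype.card_fin, nsmul_eq_mul]
    field_simp
  refine ⟨⟨fun j ↦ ?_, ?_, ?_⟩, fun b hb h₀ h₁ ↦ ?_⟩
  · rw [hcw, Fintype.card_fin]; exact div_pos (mul_pos (hw j) hn) two_pos
  · linarith [hsum c]
  · linarith [hsum c]
  · have hb2 : ∑ j, w j / b j ≤ 2 := by linarith [hsum b]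
    rw [hcw]
    exact ⟨prod_mul_card_div_le_prod (fun j ↦ (hw j).le) hb two_pos hb2,
      eq_mul_card_div_of_prod_eq (fun j ↦ (hw j).le) hb two_pos hb2⟩

/-- For `n ≥ 3` and `m ≥ 1`, the simplex `T_{(n/2, mn/2, n, …, n)}` has the smallest
volume among all simplices `T_b`, `b ∈ (0,∞)ⁿ`, whose closures contain both points
`(1,0,1,…,1)` and `(0,m,1,…,1)`, and it is the unique minimizer.  Since
`vol(T_b) = b₁⋯bₙ/n!`, this amounts to: subject to `1/b₁ + ∑_{j≥3} 1/b j ≤ 1` and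
`m/b₂ + ∑_{j≥3} 1/b j ≤ 1`, the product `b₁⋯bₙ` is uniquely minimized at
`b = (n/2, mn/2, n, …, n)`. -/
theorem simplex_min_Tm (n : ℕ) (hn : 3 ≤ n) (m : ℝ) (hm : 1 ≤ m)
    (i₀ : Fin n) (hi₀ : (i₀ : ℕ) = 0) (i₁ : Fin n) (hi₁ : (i₁ : ℕ) = 1)
    (c : Fin n → ℝ)
    (hc : c = fun j : Fin n => if (j : ℕ) = 0 then (n : ℝ) / 2
      else if (j : ℕ) = 1 then m * n / 2 else (n : ℝ)) :
    ((∀ j, 0 < c j) ∧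
      1 / c i₀ + ∑ j ∈ Finset.univ.filter (fun j : Fin n => 2 ≤ (j : ℕ)), 1 / c j ≤ 1 ∧
      m / c i₁ + ∑ j ∈ Finset.univ.filter (fun j : Fin n => 2 ≤ (j : ℕ)), 1 / c j ≤ 1) ∧
    (∀ b : Fin n → ℝ, (∀ j, 0 < b j) →
      1 / b i₀ + ∑ j ∈ Finset.univ.filter (fun j : Fin n => 2 ≤ (j : ℕ)), 1 / b j ≤ 1 →
      m / b i₁ + ∑ j ∈ Finset.univ.filter (fun j : Fin n => 2 ≤ (j : ℕ)), 1 / b j ≤ 1 →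
      (∏ j, c j) ≤ (∏ j, b j) ∧ ((∏ j, b j) = (∏ j, c j) → b = c)) :=
  simplex_min_Tm_general n m hm i₀ hi₀ i₁ hi₁ c hc
end
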